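/- Completeness for a single-filter single-sort preference: for the preference relation x ⪰ y defined as ¬(b(y) ≥ v) ∨ (b(x) ≥ v ∧ a(x) ≤ a(y)), the procedure P = sort^i_a ∘ filter_{b ≥ v} realizes ⪰, i.e., for all distinct x, y ∈ X, x ⪰ y iff there exists a list l containing x and y such that in P(l) either y is absent or x occurs before y. -/

import Mathlib

/-!
Elements failing the filter never appear in the output, so they are dominated by everything
(witness `[x, y]`). When `y` passes the filter and `x` precedes it in the output, `x` passed the
filter too, and since the output is sorted by `a`, `a x ≤ a y`. Conversely, if both pass and
`a x ≤ a y`, the list `[x, y]` is left unchanged by the procedure.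
-/

namespace List

variable {α : Type*}

/-- Holds vacuously when `y ∉ l`, which covers the case "`y` is absent". -/
def Precedes (x y : α) (l : List α) : Prop :=
  ∀ j : ℕ, l[j]? = some y → ∃ i < j, l[i]? = some x

theorem precedes_of_not_mem {x y : α} {l : List α} (hy : y ∉ l) : Precedes x y l :=
  fun _ hj => absurd (mem_of_getElem? hj) hy

theorem precedes_pair {x y : α} (hxy : x ≠ y) : Precedes x y [x, y] := by
  rintro (_ | _ | j) hj
  · exact absurd (by simpa using hj) hxy
  · exact ⟨0, Nat.zero_lt_one, rfl⟩
  · simp at hj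

theorem Precedes.mem {x y : α} {l : List α} (h : Precedes x y l) (hy : y ∈ l) : x ∈ l := by
  obtain ⟨j, hj⟩ := mem_iff_getElem?.1 hy
  obtain ⟨i, -, hi⟩ := h j hj
  exact mem_of_getElem? hi

theorem Pairwise.rel_of_precedes {R : α → α → Prop} {x y : α} {l : List α}
    (hl : l.Pairwise R) (h : Precedes x y l) (hy : y ∈ l) : R x y := by
  obtain ⟨j, hj⟩ := mem_iff_getElem?.1 hy
  obtain ⟨i, hij, hi⟩ := h j hj
  obtain ⟨hi', rfl⟩ := getElem?_eq_some_iff.1 hi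
  obtain ⟨hj', rfl⟩ := getElem?_eq_some_iff.1 hj
  exact pairwise_iff_getElem.1 hl i j hi' hj' hij

end List

section FilterSort

variable {X V : Type*} [LinearOrder V] (a b : X → V) (v : V)

/-- `List.mergeSort` is stable, so this is the paper's `sort^i_a ∘ filter_{b ≥ v}`. -/
def filterSort (l : List X) : List X :=
  (l.filter fun z => decide (v ≤ b z)).mergeSort fun p q => decide (a p ≤ a q)

variable {a b v}

theorem mem_filterSort {l : List X} {z : X} : z ∈ filterSort a b v l ↔ z ∈ l ∧ v ≤ b z := by
  simp [filterSort]

theorem pairwise_filterSort (l : List X) :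
    (filterSort a b v l).Pairwise fun p q => a p ≤ a q := by
  have sorted := List.pairwise_mergeSort (le := fun p q : X => decide (a p ≤ a q))
    (fun _ _ _ hpq hqr => by simp only [decide_eq_true_eq] at *; exact hpq.trans hqr)
    (fun p q => by simp [le_total]) (l.filter fun z => decide (v ≤ b z))
  exact sorted.imp (by simp)

theorem filterSort_pair {x y : X} (hx : v ≤ b x) (hy : v ≤ b y) (h : a x ≤ a y) :
    filterSort a b v [x, y] = [x, y] := by
  simp only [filterSort, List.filter_cons, hx, hy, decide_true, if_true, List.filter_nil]
  exact List.mergeSort_of_pairwise (by simpa using h)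

end FilterSort

theorem completeness_filter_sort {X V : Type*} [LinearOrder V] (a b : X → V) (v : V)
    (x y : X) (hxy : x ≠ y) :
    (¬ (v ≤ b y) ∨ (v ≤ b x ∧ a x ≤ a y)) ↔
    (∃ l : List X, x ∈ l ∧ y ∈ l ∧
      (let l' := List.mergeSort (List.filter (fun z => decide (v ≤ b z)) l)
        (fun p q => decide (a p ≤ a q));
       ∀ j : ℕ, l'[j]? = some y → ∃ i < j, l'[i]? = some x)) := by
  change _ ↔ ∃ l, x ∈ l ∧ y ∈ l ∧ (filterSort a b v l).Precedes x y
  by_cases hby : v ≤ b y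
  · simp only [hby, not_true_eq_false, false_or]
    constructor
    · rintro ⟨hbx, haxy⟩
      refine ⟨[x, y], by simp, by simp, ?_⟩
      rw [filterSort_pair hbx hby haxy]
      exact List.precedes_pair hxy
    · rintro ⟨l, -, hy, h⟩
      have hyl : y ∈ filterSort a b v l := mem_filterSort.2 ⟨hy, hby⟩
      exact ⟨(mem_filterSort.1 (h.mem hyl)).2, (pairwise_filterSort l).rel_of_precedes h hyl⟩
  · simp only [hby, not_false_eq_true, true_or, true_iff]
    exact ⟨[x, y], by simp, by simp, List.precedes_of_not_mem fun h => hby (mem_filterSort.1 h).2⟩
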